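/- Assume c ≥ n (every storage provider can host any number of slices). Let M₁ = Client ∥ ProviderAtt and let M₂ = Client' ∥ ProviderAtt, where Client' is identical to Client except that the per-provider counter variables ctr_c^i are removed and the capacity guards ctr_c^i < c and ctr_c^i ≥ c are dropped (the busy sending transition from pc_c = 1 is always enabled). Let V be the set of all state variables of M₁ except the counters ctr_c^i, i.e. V = {pc_c, s_c, ctr_c, pc_a, ctr_a, att_a^1,…,att_a^m}, and assume the labeling functions L₁ and L₂ are invariant with respect to V and assign equal labels to V-equivalent states across the two systems. Then M₁ ≈ M₂; indeed the relation R on S₁ ⊎ S₂ defined by R(s,s') iff s ≡_V s' is a probabilistic bisimulation witnessing this. -/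

import Mathlib

/-- Total probability of moving from `s` under action `α` into the set of states `X`. -/
noncomputable def prSet {S Act : Type*} (P : S → Act → S → ℝ) (s : S) (α : Act) (X : Set S) : ℝ :=
  ∑' t : X, P s α t.1

/-- `R` is a probabilistic bisimulation w.r.t. the transition probabilities `P` and the
labeling `L`: it is an equivalence relation, related states carry the same label, and
related states move into every `R`-equivalence class with the same probability. -/
structure IsProbBisim {S Act AP : Type*} (P : S → Act → S → ℝ) (L : S → Set AP)
    (R : S → S → Prop) : Prop where
  equiv : Equivalence R
  label_eq : ∀ s s', R s s' → L s = L s'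
  pr_eq : ∀ s s', R s s' → ∀ (α : Act) (t : S),
    prSet P s α {u | R t u} = prSet P s' α {u | R t u}

/-- Transition probabilities of the disjoint-union MDP (componentwise, no cross transitions). -/
def unionPr {S₁ S₂ Act : Type*} (P₁ : S₁ → Act → S₁ → ℝ) (P₂ : S₂ → Act → S₂ → ℝ) :
    S₁ ⊕ S₂ → Act → S₁ ⊕ S₂ → ℝ
  | Sum.inl s, α, Sum.inl t => P₁ s α t
  | Sum.inr s, α, Sum.inr t => P₂ s α t
  | _, _, _ => 0

/-- Labeling of the disjoint-union MDP. -/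
def unionL {S₁ S₂ AP : Type*} (L₁ : S₁ → Set AP) (L₂ : S₂ → Set AP) : S₁ ⊕ S₂ → Set AP
  | Sum.inl s => L₁ s
  | Sum.inr s => L₂ s

/-- Two MDPs (given by transition probabilities, initial distributions and labelings) are
bisimilar (`M₁ ≈ M₂`) iff some probabilistic bisimulation on the disjoint-union MDP relates
them so that every equivalence class gets the same initial weight from both sides. -/
noncomputable def Bisimilar {S₁ S₂ Act AP : Type*}
    (P₁ : S₁ → Act → S₁ → ℝ) (ι₁ : S₁ → ℝ) (L₁ : S₁ → Set AP)
    (P₂ : S₂ → Act → S₂ → ℝ) (ι₂ : S₂ → ℝ) (L₂ : S₂ → Set AP) : Prop :=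
  ∃ R : S₁ ⊕ S₂ → S₁ ⊕ S₂ → Prop,
    IsProbBisim (unionPr P₁ P₂) (unionL L₁ L₂) R ∧
    ∀ t : S₁ ⊕ S₂,
      (∑' s : {s : S₁ // R (Sum.inl s) t}, ι₁ s.1) =
      (∑' s : {s : S₂ // R (Sum.inr s) t}, ι₂ s.1)

attribute [local instance] Classical.propDecidable

/-- Actions of the composed systems `Client ∥ ProviderAtt` and `Client' ∥ ProviderAtt`:
the synchronized `busy` action, an internal client action and an internal attacker action. -/
inductive PAct : Type
  | busy : PAct
  | ctau : PAct
  | atau : PAct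

/-- A state of `Client ∥ ProviderAtt` with `m` providers and `n` slices: `pcc`, `sc`,
`ctrc`, and the per-provider counters `sctr` are the client variables (`sc = none` encodes
`s_c = 0`), while `pca ∈ {0,…,m,done}` (`done` encoded as `m+1`), the flags `att` and `ctra`
are the attacker variables. -/
structure PS1 (m n : ℕ) where
  pcc : Fin 3
  sc : Option (Fin m)
  ctrc : Fin (n + 1)
  sctr : Fin m → Fin (n + 1)
  pca : Fin (m + 2)
  att : Fin m → Bool
  ctra : Fin (n + 1)

/-- A state of `Client' ∥ ProviderAtt`: as `PS1`, but the per-provider counter variables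
`ctr_c^i` are removed. -/
structure PS2 (m n : ℕ) where
  pcc : Fin 3
  sc : Option (Fin m)
  ctrc : Fin (n + 1)
  pca : Fin (m + 2)
  att : Fin m → Bool
  ctra : Fin (n + 1)

/-- Increment of a bounded counter (saturating at `n`; all increments performed by the
model happen strictly below `n`). -/
def finInc {n : ℕ} (x : Fin (n + 1)) : Fin (n + 1) := ⟨min (x.1 + 1) n, by omega⟩

/-- Increment of the attacker's program counter (saturating at `m+1`, the `done` value). -/
def pcaInc {m : ℕ} (x : Fin (m + 2)) : Fin (m + 2) := ⟨min (x.1 + 1) (m + 1), by omega⟩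

/-- Joint `busy` step of `M₁`: the slice is sent to provider `i`; the attacker stores it
iff provider `i` has been successfully attacked. -/
def busyT1 {m n : ℕ} (s : PS1 m n) (i : Fin m) : PS1 m n :=
  { s with pcc := 0, sc := none, ctrc := finInc s.ctrc,
           sctr := Function.update s.sctr i (finInc (s.sctr i)),
           ctra := if s.att i then finInc s.ctra else s.ctra }

/-- Joint `busy` step of `M₂` (no per-provider counters). -/
def busyT2 {m n : ℕ} (s : PS2 m n) (i : Fin m) : PS2 m n :=
  { s with pcc := 0, sc := none, ctrc := finInc s.ctrc,
           ctra := if s.att i then finInc s.ctra else s.ctra }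

/-- Transition probabilities of `M₁ = Client ∥ ProviderAtt` (capacity `c`, threshold `k₁`,
provider-picking probabilities `p`, attack probabilities `a`, reconstruction
probabilities `x`). -/
noncomputable def provPr1 {m n : ℕ} (c k₁ : ℕ) (p a : Fin m → ℝ) (x : ℕ → ℝ)
    (s : PS1 m n) (α : PAct) (t : PS1 m n) : ℝ :=
  match α with
  | PAct.ctau =>
      (match t.sc with
        | some i =>
            if s.pcc = 0 ∧ (s.ctrc : ℕ) < n ∧ t = { s with pcc := 1, sc := some i } then
              p i
            else 0
        | none => 0)
      + (if (∃ i, s.sc = some i ∧ c ≤ (s.sctr i : ℕ)) ∧ s.pcc = 1 ∧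
            t = { s with pcc := 0, sc := none } then 1 else 0)
      + (if s.pcc = 0 ∧ (s.ctrc : ℕ) = n ∧ t = { s with pcc := 2 } then 1 else 0)
  | PAct.atau =>
      (if h : (s.pca : ℕ) < m then
        (if t = { s with pca := pcaInc s.pca, att := Function.update s.att ⟨s.pca, h⟩ true }
         then a ⟨s.pca, h⟩ else 0)
        + (if t = { s with pca := pcaInc s.pca } then 1 - a ⟨s.pca, h⟩ else 0)
       else 0)
      + (if (s.pca : ℕ) = m ∧ k₁ ≤ (s.ctra : ℕ) then
          (if t = { s with pca := Fin.last (m + 1) } then x (s.ctra : ℕ) else 0)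
          + (if t = s then 1 - x (s.ctra : ℕ) else 0)
         else 0)
  | PAct.busy =>
      match s.sc with
      | some i =>
          if s.pcc = 1 ∧ (s.sctr i : ℕ) < c ∧ (s.pca : ℕ) = m then
            if t = busyT1 s i then 1 else 0
          else 0
      | none => 0

/-- Transition probabilities of `M₂ = Client' ∥ ProviderAtt`: as `provPr1`, but the counters
`ctr_c^i` are removed and the capacity guards `ctr_c^i < c` / `ctr_c^i ≥ c` are dropped
(the `busy` sending transition from `pc_c = 1` is always enabled, the retry transition
disappears). -/
noncomputable def provPr2 {m n : ℕ} (k₁ : ℕ) (p a : Fin m → ℝ) (x : ℕ → ℝ)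
    (s : PS2 m n) (α : PAct) (t : PS2 m n) : ℝ :=
  match α with
  | PAct.ctau =>
      (match t.sc with
        | some i =>
            if s.pcc = 0 ∧ (s.ctrc : ℕ) < n ∧ t = { s with pcc := 1, sc := some i } then
              p i
            else 0
        | none => 0)
      + (if s.pcc = 0 ∧ (s.ctrc : ℕ) = n ∧ t = { s with pcc := 2 } then 1 else 0)
  | PAct.atau =>
      (if h : (s.pca : ℕ) < m then
        (if t = { s with pca := pcaInc s.pca, att := Function.update s.att ⟨s.pca, h⟩ true }
         then a ⟨s.pca, h⟩ else 0)
        + (if t = { s with pca := pcaInc s.pca } then 1 - a ⟨s.pca, h⟩ else 0)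
       else 0)
      + (if (s.pca : ℕ) = m ∧ k₁ ≤ (s.ctra : ℕ) then
          (if t = { s with pca := Fin.last (m + 1) } then x (s.ctra : ℕ) else 0)
          + (if t = s then 1 - x (s.ctra : ℕ) else 0)
         else 0)
  | PAct.busy =>
      match s.sc with
      | some i =>
          if s.pcc = 1 ∧ (s.pca : ℕ) = m then
            if t = busyT2 s i then 1 else 0
          else 0
      | none => 0

/-- The values of the variables `V = {pc_c, s_c, ctr_c, pc_a, att_a^1,…,att_a^m, ctr_a}`
(all variables except the counters `ctr_c^i`) in a state of `M₁`. -/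
def proj1 {m n : ℕ} (s : PS1 m n) :
    Fin 3 × Option (Fin m) × Fin (n + 1) × Fin (m + 2) × (Fin m → Bool) × Fin (n + 1) :=
  (s.pcc, s.sc, s.ctrc, s.pca, s.att, s.ctra)

/-- The values of the variables in `V` in a state of `M₂`. -/
def proj2 {m n : ℕ} (s : PS2 m n) :
    Fin 3 × Option (Fin m) × Fin (n + 1) × Fin (m + 2) × (Fin m → Bool) × Fin (n + 1) :=
  (s.pcc, s.sc, s.ctrc, s.pca, s.att, s.ctra)

/-- The values of the variables in `V` in a state of the disjoint union. -/
def projU {m n : ℕ} : PS1 m n ⊕ PS2 m n →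
    Fin 3 × Option (Fin m) × Fin (n + 1) × Fin (m + 2) × (Fin m → Bool) × Fin (n + 1) :=
  Sum.elim proj1 proj2

/-- Initial state of `M₁`: everything is `0` (all attack flags unset). -/
def initP1 {m n : ℕ} : PS1 m n := ⟨0, none, 0, fun _ => 0, 0, fun _ => false, 0⟩

/-- Initial state of `M₂`. -/
def initP2 {m n : ℕ} : PS2 m n := ⟨0, none, 0, 0, fun _ => false, 0⟩

/-- States reachable from `init` by finitely many positive-probability transitions
(the state space of the PRISM model). -/
def Reach {S Act : Type*} (P : S → Act → S → ℝ) (init : S) : S → Prop :=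
  Relation.ReflTransGen (fun s t => ∃ α, 0 < P s α t) init

/-! Forgetting the counters `ctr_c^i` maps `M₁` onto `M₂`. In every reachable state of `M₁`
each `ctr_c^i` is at most `ctr_c`, and `ctr_c < n ≤ c` while the client is about to send, so
the capacity guards of `M₁` always hold and its retry transition never fires. Moreover the
counters after a step are determined by the source state and the action, so a `V`-class
contains at most one successor of a given state, and that successor is reached with the
probability of the corresponding step of `M₂`. Hence the kernel of the forgetful map is a
lumping of the disjoint union, i.e. a probabilistic bisimulation, and it relates the two
initial states. -/

open Function Set

section MDP

lemma tsum_subtype_eq_ite_of_unique {β : Type*} {Q : β → Prop} {f : β → ℝ} {w : β}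
    (hf : ∀ b, Q b → f b ≠ 0 → b = w) :
    ∑' b : {b // Q b}, f b = if Q w then f w else 0 := by
  refine (tsum_subtype {b | Q b} f).trans ?_
  rw [tsum_eq_single w fun b hb => ?_]
  · rfl
  by_contra h
  exact hb (hf b (indicator_apply_ne_zero.1 h).1 (indicator_apply_ne_zero.1 h).2)

lemma tsum_preimage_eq_of_injective {T S : Type*} {g : T → S} (hg : Injective g) {f : S → ℝ}
    (Y : Set S) (hf : ∀ s ∈ Y, f s ≠ 0 → s ∈ range g) :
    ∑' t : g ⁻¹' Y, f (g t) = ∑' s : Y, f s := by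
  refine (tsum_subtype (g ⁻¹' Y) (f ∘ g)).trans ?_
  rw [tsum_subtype]
  simp_rw [indicator_comp_right]
  exact hg.tsum_eq fun s hs =>
    hf s (indicator_apply_ne_zero.1 hs).1 (indicator_apply_ne_zero.1 hs).2

variable {S S₁ S₂ Act : Type*}

lemma prSet_unionPr_inl (P₁ : S₁ → Act → S₁ → ℝ) (P₂ : S₂ → Act → S₂ → ℝ) (s : S₁) (α : Act)
    (X : Set (S₁ ⊕ S₂)) :
    prSet (unionPr P₁ P₂) (.inl s) α X = prSet P₁ s α (Sum.inl ⁻¹' X) :=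
  (tsum_preimage_eq_of_injective Sum.inl_injective X fun
    | .inl t, _, _ => ⟨t, rfl⟩
    | .inr _, _, h => absurd rfl h).symm

lemma prSet_unionPr_inr (P₁ : S₁ → Act → S₁ → ℝ) (P₂ : S₂ → Act → S₂ → ℝ) (s : S₂) (α : Act)
    (X : Set (S₁ ⊕ S₂)) :
    prSet (unionPr P₁ P₂) (.inr s) α X = prSet P₂ s α (Sum.inr ⁻¹' X) :=
  (tsum_preimage_eq_of_injective Sum.inr_injective X fun
    | .inl _, _, h => absurd rfl h
    | .inr t, _, _ => ⟨t, rfl⟩).symm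

lemma prSet_reach {P : S → Act → S → ℝ} (hP : ∀ s α t, 0 ≤ P s α t) {init : S}
    (s : {s // Reach P init s}) (α : Act) (Y : Set S) :
    prSet (fun (s : {s // Reach P init s}) α t => P s.1 α t.1) s α (Subtype.val ⁻¹' Y) =
      prSet P s.1 α Y :=
  tsum_preimage_eq_of_injective Subtype.val_injective Y fun t _ ht =>
    ⟨⟨t, s.2.tail ⟨α, (hP _ _ _).lt_of_ne' ht⟩⟩, rfl⟩

lemma prSet_eq_of_unique {P : S → Act → S → ℝ} {s : S} {α : Act} {X : Set S} {t : S}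
    (ht : t ∈ X) (h : ∀ u ∈ X, P s α u ≠ 0 → u = t) : prSet P s α X = P s α t := by
  rw [prSet, tsum_subtype_eq_ite_of_unique h, if_pos ht]

lemma IsProbBisim.of_ker {AP B : Type*} {P : S → Act → S → ℝ} {L : S → Set AP}
    {R : S → S → Prop} (g : S → B) (hR : ∀ u v, R u v ↔ g u = g v) (Q : B → Act → B → ℝ)
    (hL : ∀ u v, g u = g v → L u = L v) (hP : ∀ u α b, prSet P u α {w | g w = b} = Q (g u) α b) :
    IsProbBisim P L R := by
  obtain rfl : R = fun u v => g u = g v := funext₂ fun u v => propext (hR u v)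
  refine ⟨eq_equivalence.comap g, hL, fun u v h α t => ?_⟩
  simp_rw [eq_comm (a := g t)]
  rw [hP, hP, h]

lemma Bisimilar.of_isProbBisim {AP : Type*} {P₁ : S₁ → Act → S₁ → ℝ} {P₂ : S₂ → Act → S₂ → ℝ}
    {L₁ : S₁ → Set AP} {L₂ : S₂ → Set AP} {R : S₁ ⊕ S₂ → S₁ ⊕ S₂ → Prop}
    (hR : IsProbBisim (unionPr P₁ P₂) (unionL L₁ L₂) R) {ι₁ : S₁ → ℝ} {ι₂ : S₂ → ℝ}
    {s₁ : S₁} {s₂ : S₂} (hι₁ : ∀ s, ι₁ s ≠ 0 → s = s₁) (hι₂ : ∀ s, ι₂ s ≠ 0 → s = s₂)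
    (hι : ι₁ s₁ = ι₂ s₂) (hs : R (.inl s₁) (.inr s₂)) :
    Bisimilar P₁ ι₁ L₁ P₂ ι₂ L₂ := by
  refine ⟨R, hR, fun t => ?_⟩
  rw [tsum_subtype_eq_ite_of_unique fun s _ => hι₁ s,
    tsum_subtype_eq_ite_of_unique fun s _ => hι₂ s, hι,
    if_congr ⟨hR.equiv.trans (hR.equiv.symm hs), hR.equiv.trans hs⟩ rfl rfl]

end MDP

def PS2.extend {m n : ℕ} (t : PS2 m n) (σ : Fin m → Fin (n + 1)) : PS1 m n :=
  ⟨t.pcc, t.sc, t.ctrc, σ, t.pca, t.att, t.ctra⟩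

namespace PS1

variable {m n c k₁ : ℕ} {p a : Fin m → ℝ} {x : ℕ → ℝ}

def forget (s : PS1 m n) : PS2 m n := ⟨s.pcc, s.sc, s.ctrc, s.pca, s.att, s.ctra⟩

@[simp] lemma forget_extend (t : PS2 m n) (σ : Fin m → Fin (n + 1)) :
    (t.extend σ).forget = t := rfl

lemma extend_forget (s : PS1 m n) : s.forget.extend s.sctr = s := rfl

lemma extend_injective (σ : Fin m → Fin (n + 1)) : Injective fun t : PS2 m n => t.extend σ :=
  LeftInverse.injective (g := forget) fun _ => rfl

@[simp] lemma sc_extend (t : PS2 m n) (σ : Fin m → Fin (n + 1)) : (t.extend σ).sc = t.sc := rfl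

lemma extend_eq_iff {t : PS2 m n} {σ : Fin m → Fin (n + 1)} {u : PS1 m n} :
    t.extend σ = u ↔ t = u.forget ∧ σ = u.sctr := by
  cases t; cases u; simp only [PS2.extend, forget, PS1.mk.injEq, PS2.mk.injEq]; tauto

def nextSctr (s : PS1 m n) : PAct → Fin m → Fin (n + 1)
  | .busy =>
    match s.sc with
    | some i => update s.sctr i (finInc (s.sctr i))
    | none => s.sctr
  | _ => s.sctr

lemma busyT1_eq_extend {s : PS1 m n} {i : Fin m} (hi : s.sc = some i) :
    busyT1 s i = (busyT2 s.forget i).extend (s.nextSctr .busy) := by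
  simp only [busyT1, busyT2, nextSctr, hi, forget, PS2.extend]

lemma provPr1_busy_ne_zero {s t : PS1 m n} (h : provPr1 c k₁ p a x s .busy t ≠ 0) :
    ∃ i, s.sc = some i ∧ s.pcc = 1 ∧ t = busyT1 s i := by
  simp only [provPr1] at h
  split at h
  next i hi =>
    split_ifs at h with hg ht
    exacts [⟨i, hi, hg.1, ht⟩, absurd rfl h, absurd rfl h]
  next => exact absurd rfl h

lemma provPr1_ctau_ne_zero {s t : PS1 m n} (h : provPr1 c k₁ p a x s .ctau t ≠ 0) :
    t.sctr = s.sctr ∧ t.ctrc = s.ctrc ∧ (t.pcc = 1 → (s.ctrc : ℕ) < n) := by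
  simp only [provPr1] at h
  split at h <;> split_ifs at h <;> simp_all

lemma provPr1_atau_ne_zero {s t : PS1 m n} (h : provPr1 c k₁ p a x s .atau t ≠ 0) :
    t.sctr = s.sctr ∧ t.ctrc = s.ctrc ∧ t.pcc = s.pcc := by
  simp only [provPr1] at h
  split_ifs at h <;> first | (subst_vars; exact ⟨rfl, rfl, rfl⟩) | simp at h

lemma sctr_eq_nextSctr {s t : PS1 m n} {α : PAct} (h : provPr1 c k₁ p a x s α t ≠ 0) :
    t.sctr = s.nextSctr α := by
  cases α
  · obtain ⟨i, hi, -, rfl⟩ := provPr1_busy_ne_zero h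
    simp only [nextSctr, hi, busyT1]
  · exact (provPr1_ctau_ne_zero h).1
  · exact (provPr1_atau_ne_zero h).1

structure Inv (s : PS1 m n) : Prop where
  sctr_le_ctrc : ∀ i, (s.sctr i : ℕ) ≤ s.ctrc
  ctrc_lt_of_pcc_eq_one : s.pcc = 1 → (s.ctrc : ℕ) < n

lemma Inv.sctr_lt {s : PS1 m n} (hs : s.Inv) (hcap : n ≤ c) (hpcc : s.pcc = 1) (i : Fin m) :
    (s.sctr i : ℕ) < c :=
  ((hs.sctr_le_ctrc i).trans_lt (hs.ctrc_lt_of_pcc_eq_one hpcc)).trans_le hcap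

lemma Inv.of_provPr1_ne_zero {s t : PS1 m n} {α : PAct} (hs : s.Inv)
    (h : provPr1 c k₁ p a x s α t ≠ 0) : t.Inv := by
  cases α
  · obtain ⟨i, -, hpcc, rfl⟩ := provPr1_busy_ne_zero h
    have hlt := hs.ctrc_lt_of_pcc_eq_one hpcc
    refine ⟨fun j => ?_, fun h0 => absurd h0 (by simp [busyT1])⟩
    have hj := hs.sctr_le_ctrc j
    rcases eq_or_ne j i with rfl | hji
    · simp only [busyT1, update_self, finInc]
      omega
    · simp only [busyT1, update_of_ne hji, finInc]
      omega
  · obtain ⟨hsctr, hctrc, hpcc⟩ := provPr1_ctau_ne_zero h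
    exact ⟨hsctr ▸ hctrc ▸ hs.sctr_le_ctrc, hctrc ▸ hpcc⟩
  · obtain ⟨hsctr, hctrc, hpcc⟩ := provPr1_atau_ne_zero h
    exact ⟨hsctr ▸ hctrc ▸ hs.sctr_le_ctrc, hpcc ▸ hctrc ▸ hs.ctrc_lt_of_pcc_eq_one⟩

lemma Inv.of_reach {s : PS1 m n} (h : Reach (provPr1 c k₁ p a x) initP1 s) : s.Inv := by
  induction h with
  | refl => exact ⟨fun _ => by simp [initP1], by simp [initP1]⟩
  | tail _ hst ih =>
    obtain ⟨α, hα⟩ := hst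
    exact ih.of_provPr1_ne_zero hα.ne'

lemma provPr1_extend_nextSctr (hcap : n ≤ c) {s : PS1 m n} (hs : s.Inv) (α : PAct)
    (t : PS2 m n) :
    provPr1 c k₁ p a x s α (t.extend (s.nextSctr α)) = provPr2 k₁ p a x s.forget α t := by
  cases α
  case busy =>
    cases hi : s.sc with
    | none => simp only [provPr1, provPr2, forget, hi]
    | some i =>
      have hguard :
          s.pcc = 1 ∧ (s.sctr i : ℕ) < c ∧ (s.pca : ℕ) = m ↔ s.pcc = 1 ∧ (s.pca : ℕ) = m :=
        ⟨fun h => ⟨h.1, h.2.2⟩, fun h => ⟨h.1, hs.sctr_lt hcap h.1 i, h.2⟩⟩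
      simp only [provPr1, provPr2, forget, hi, hguard, busyT1_eq_extend hi,
        (extend_injective _).eq_iff]
  case ctau =>
    simp only [provPr1]
    rw [if_neg fun ⟨⟨i, _, hc⟩, hpcc, _⟩ => (hs.sctr_lt hcap hpcc i).not_ge hc]
    simp only [provPr2, nextSctr, sc_extend, extend_eq_iff, forget, and_true, add_zero]
    rfl
  case atau =>
    simp only [provPr1, provPr2, nextSctr, extend_eq_iff, forget, and_true]
    rfl

end PS1

section Nonneg

variable {m n c k₁ : ℕ} {p a : Fin m → ℝ} {x : ℕ → ℝ}

lemma provPr1_nonneg (hp : ∀ i, 0 ≤ p i) (ha : ∀ i, 0 ≤ a i ∧ a i ≤ 1)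
    (hx : ∀ j, 0 ≤ x j ∧ x j ≤ 1) (s : PS1 m n) (α : PAct) (t : PS1 m n) :
    0 ≤ provPr1 c k₁ p a x s α t := by
  unfold provPr1
  repeat' first
    | exact le_rfl | exact zero_le_one | exact hp _ | exact (ha _).1 | exact (hx _).1
    | exact sub_nonneg.2 (ha _).2 | exact sub_nonneg.2 (hx _).2
    | apply add_nonneg | split

lemma provPr2_nonneg (hp : ∀ i, 0 ≤ p i) (ha : ∀ i, 0 ≤ a i ∧ a i ≤ 1)
    (hx : ∀ j, 0 ≤ x j ∧ x j ≤ 1) (s : PS2 m n) (α : PAct) (t : PS2 m n) :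
    0 ≤ provPr2 k₁ p a x s α t := by
  unfold provPr2
  repeat' first
    | exact le_rfl | exact zero_le_one | exact hp _ | exact (ha _).1 | exact (hx _).1
    | exact sub_nonneg.2 (ha _).2 | exact sub_nonneg.2 (hx _).2
    | apply add_nonneg | split

end Nonneg

section Abstraction

open PS1

variable {m n c k₁ : ℕ} {p a : Fin m → ℝ} {x : ℕ → ℝ}

def forgetSum {A : PS1 m n → Prop} {B : PS2 m n → Prop} : {s // A s} ⊕ {s // B s} → PS2 m n :=
  Sum.elim (fun s => s.1.forget) Subtype.val

lemma proj2_injective : Injective (proj2 : PS2 m n → _) := by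
  rintro ⟨⟩ ⟨⟩ h
  simp_all only [proj2, Prod.mk.injEq]

lemma projU_map_val {A : PS1 m n → Prop} {B : PS2 m n → Prop} (u : {s // A s} ⊕ {s // B s}) :
    projU (Sum.map Subtype.val Subtype.val u) = proj2 (forgetSum u) := by
  cases u <;> rfl

lemma unionL_eq_forgetSum {AP : Type*} {A : PS1 m n → Prop} {B : PS2 m n → Prop}
    {L₁ : PS1 m n → Set AP} {L₂ : PS2 m n → Set AP}
    (hL : ∀ (s : PS1 m n) (s' : PS2 m n), proj1 s = proj2 s' → L₁ s = L₂ s')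
    (u : {s // A s} ⊕ {s // B s}) :
    unionL (fun s => L₁ s.1) (fun s => L₂ s.1) u = L₂ (forgetSum u) := by
  rcases u with s | s
  exacts [hL _ _ rfl, rfl]

lemma prSet_forgetSum (hcap : n ≤ c) (hp : ∀ i, 0 ≤ p i) (ha : ∀ i, 0 ≤ a i ∧ a i ≤ 1)
    (hx : ∀ j, 0 ≤ x j ∧ x j ≤ 1)
    (u : {s // Reach (provPr1 c k₁ p a x) initP1 s} ⊕ {s // Reach (provPr2 k₁ p a x) initP2 s})
    (α : PAct) (t : PS2 m n) :
    prSet (unionPr (fun s α t => provPr1 c k₁ p a x s.1 α t.1)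
        (fun s α t => provPr2 k₁ p a x s.1 α t.1)) u α {w | forgetSum w = t} =
      provPr2 k₁ p a x (forgetSum u) α t := by
  rcases u with s | s
  · calc _ = prSet (provPr1 c k₁ p a x) s.1 α {u | u.forget = t} := by
          rw [prSet_unionPr_inl]
          exact prSet_reach (provPr1_nonneg hp ha hx) s α {u | u.forget = t}
      _ = provPr1 c k₁ p a x s.1 α (t.extend (s.1.nextSctr α)) :=
          prSet_eq_of_unique (forget_extend t _) fun u hu h => by
            rw [← extend_forget u, hu.out, sctr_eq_nextSctr h]
      _ = _ := provPr1_extend_nextSctr hcap (Inv.of_reach s.2) α t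
  · calc _ = prSet (provPr2 k₁ p a x) s.1 α {u | u = t} := by
          rw [prSet_unionPr_inr]
          exact prSet_reach (provPr2_nonneg hp ha hx) s α {u | u = t}
      _ = _ := prSet_eq_of_unique rfl fun _ h _ => h

end Abstraction

theorem stmt6_general (m n c k₁ : ℕ) (hcap : n ≤ c)
    (p : Fin m → ℝ) (hp0 : ∀ i, 0 ≤ p i)
    (a : Fin m → ℝ) (ha : ∀ i, 0 ≤ a i ∧ a i ≤ 1)
    (x : ℕ → ℝ) (hx : ∀ j, 0 ≤ x j ∧ x j ≤ 1)
    {AP : Type*} (L₁ : PS1 m n → Set AP) (L₂ : PS2 m n → Set AP)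
    (hL₁₂ : ∀ (s : PS1 m n) (s' : PS2 m n), proj1 s = proj2 s' → L₁ s = L₂ s') :
    IsProbBisim
      (unionPr
        (fun (s : {s : PS1 m n // Reach (provPr1 c k₁ p a x) initP1 s}) (α : PAct)
             (t : {s : PS1 m n // Reach (provPr1 c k₁ p a x) initP1 s}) =>
          provPr1 c k₁ p a x s.1 α t.1)
        (fun (s : {s : PS2 m n // Reach (provPr2 k₁ p a x) initP2 s}) (α : PAct)
             (t : {s : PS2 m n // Reach (provPr2 k₁ p a x) initP2 s}) =>
          provPr2 k₁ p a x s.1 α t.1))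
      (unionL (fun s => L₁ s.1) (fun s => L₂ s.1))
      (fun u v => projU (Sum.map Subtype.val Subtype.val u)
                = projU (Sum.map Subtype.val Subtype.val v))
    ∧
    Bisimilar
      (fun (s : {s : PS1 m n // Reach (provPr1 c k₁ p a x) initP1 s}) (α : PAct)
           (t : {s : PS1 m n // Reach (provPr1 c k₁ p a x) initP1 s}) =>
        provPr1 c k₁ p a x s.1 α t.1)
      (fun s => if s.1 = initP1 then (1 : ℝ) else 0)
      (fun s => L₁ s.1)
      (fun (s : {s : PS2 m n // Reach (provPr2 k₁ p a x) initP2 s}) (α : PAct)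
           (t : {s : PS2 m n // Reach (provPr2 k₁ p a x) initP2 s}) =>
        provPr2 k₁ p a x s.1 α t.1)
      (fun s => if s.1 = initP2 then (1 : ℝ) else 0)
      (fun s => L₂ s.1) := by
  refine ⟨?bisim, Bisimilar.of_isProbBisim ?bisim (s₁ := ⟨initP1, .refl⟩) (s₂ := ⟨initP2, .refl⟩)
    (fun s hs => Subtype.ext (not_not.1 fun h => hs (if_neg h)))
    (fun s hs => Subtype.ext (not_not.1 fun h => hs (if_neg h))) (by simp) rfl⟩
  case bisim =>
    refine IsProbBisim.of_ker forgetSum (fun u v => ?_) (provPr2 k₁ p a x) (fun u v h => ?_)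
      (prSet_forgetSum hcap hp0 ha hx)
    · rw [projU_map_val, projU_map_val, proj2_injective.eq_iff]
    · rw [unionL_eq_forgetSum hL₁₂, unionL_eq_forgetSum hL₁₂, h]

/-- Variable abstraction for the provider attacker: if `c ≥ n` then
`M₁ = Client ∥ ProviderAtt` and `M₂ = Client' ∥ ProviderAtt` (restricted to their reachable
state spaces) are bisimilar, provided the labelings are invariant w.r.t. the set `V` of all
variables except the counters `ctr_c^i`; indeed the relation `R(s,s') ↔ s ≡_V s'` is a
probabilistic bisimulation witnessing this. -/
theorem stmt6 (m n c k₁ : ℕ) (hcap : n ≤ c) (hk₁ : k₁ ≤ n)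
    (p : Fin m → ℝ) (hp0 : ∀ i, 0 ≤ p i) (hp1 : ∑ i, p i = 1)
    (a : Fin m → ℝ) (ha : ∀ i, 0 ≤ a i ∧ a i ≤ 1)
    (x : ℕ → ℝ) (hx : ∀ j, 0 ≤ x j ∧ x j ≤ 1)
    {AP : Type*} (L₁ : PS1 m n → Set AP) (L₂ : PS2 m n → Set AP)
    (hL₁ : ∀ s s', proj1 s = proj1 s' → L₁ s = L₁ s')
    (hL₂ : ∀ s s', proj2 s = proj2 s' → L₂ s = L₂ s')
    (hL₁₂ : ∀ (s : PS1 m n) (s' : PS2 m n), proj1 s = proj2 s' → L₁ s = L₂ s') :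
    IsProbBisim
      (unionPr
        (fun (s : {s : PS1 m n // Reach (provPr1 c k₁ p a x) initP1 s}) (α : PAct)
             (t : {s : PS1 m n // Reach (provPr1 c k₁ p a x) initP1 s}) =>
          provPr1 c k₁ p a x s.1 α t.1)
        (fun (s : {s : PS2 m n // Reach (provPr2 k₁ p a x) initP2 s}) (α : PAct)
             (t : {s : PS2 m n // Reach (provPr2 k₁ p a x) initP2 s}) =>
          provPr2 k₁ p a x s.1 α t.1))
      (unionL (fun s => L₁ s.1) (fun s => L₂ s.1))
      (fun u v => projU (Sum.map Subtype.val Subtype.val u)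
                = projU (Sum.map Subtype.val Subtype.val v))
    ∧
    Bisimilar
      (fun (s : {s : PS1 m n // Reach (provPr1 c k₁ p a x) initP1 s}) (α : PAct)
           (t : {s : PS1 m n // Reach (provPr1 c k₁ p a x) initP1 s}) =>
        provPr1 c k₁ p a x s.1 α t.1)
      (fun s => if s.1 = initP1 then (1 : ℝ) else 0)
      (fun s => L₁ s.1)
      (fun (s : {s : PS2 m n // Reach (provPr2 k₁ p a x) initP2 s}) (α : PAct)
           (t : {s : PS2 m n // Reach (provPr2 k₁ p a x) initP2 s}) =>
        provPr2 k₁ p a x s.1 α t.1)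
      (fun s => if s.1 = initP2 then (1 : ℝ) else 0)
      (fun s => L₂ s.1) :=
  stmt6_general m n c k₁ hcap p hp0 a ha x hx L₁ L₂ hL₁₂
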